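/- With A and J the n×n quaternionic matrices defined in the context, for every t ∈ ℝ one has exp(t·A) = I − J + cos(t)·J + sin(t)·A, where I is the n×n identity matrix and exp denotes the exponential of quaternionic matrices (defined by the convergent power series Σ_{k≥0} (tA)^k/k! in the Banach ℝ-algebra of n×n matrices over ℍ). -/

import Mathlib

/-!
The two identities `A * A = -J` and `A * J = A` already force `A ^ (2m+1) = (-1)^m • A` and
`A ^ (2m+2) = (-1)^(m+1) • J`, so the exponential series of `t • A` splits into `1 - J` plus the
cosine series times `J` plus the sine series times `A`. Both identities are block computations
that only use `v* v = ‖v‖²` and `z² = -|z|² = ‖v‖² - 1`.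
-/

open Matrix
open scoped Quaternion Nat

section Exponential

variable {𝔸 : Type*} [Ring 𝔸] [Algebra ℝ 𝔸] {A J : 𝔸}

theorem pow_two_mul_add_one_of_mul_self_eq_neg (hAA : A * A = -J) (hAJ : A * J = A) (m : ℕ) :
    A ^ (2 * m + 1) = ((-1 : ℝ) ^ m) • A := by
  induction m with
  | zero => simp
  | succ m ih =>
    rw [show 2 * (m + 1) + 1 = 2 * m + 1 + 2 by ring, pow_add, ih, sq, smul_mul_assoc, hAA,
      mul_neg, hAJ, smul_neg, ← neg_smul, pow_succ, mul_neg_one]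

theorem pow_two_mul_add_two_of_mul_self_eq_neg (hAA : A * A = -J) (hAJ : A * J = A) (m : ℕ) :
    A ^ (2 * m + 2) = ((-1 : ℝ) ^ (m + 1)) • J := by
  rw [pow_succ, pow_two_mul_add_one_of_mul_self_eq_neg hAA hAJ, smul_mul_assoc, hAA, pow_succ,
    mul_neg_one, neg_smul, smul_neg]

variable [TopologicalSpace 𝔸] [IsTopologicalRing 𝔸] [T2Space 𝔸] [ContinuousSMul ℝ 𝔸]

theorem exp_smul_of_mul_self_eq_neg (hAA : A * A = -J) (hAJ : A * J = A) (t : ℝ) :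
    NormedSpace.exp (t • A) = 1 - J + Real.cos t • J + Real.sin t • A := by
  have heven : HasSum (fun m => ((2 * m)! : ℝ)⁻¹ • (t • A) ^ (2 * m))
      (Real.cos t • J + (1 - J)) := by
    refine (((Real.hasSum_cos t).smul_const J).add (hasSum_ite_eq 0 (1 - J))).congr_fun
      fun m => ?_
    rcases m with _ | m
    · simp
    · rw [smul_pow, if_neg m.succ_ne_zero, add_zero, smul_smul, mul_add_one,
        pow_two_mul_add_two_of_mul_self_eq_neg hAA hAJ, smul_smul]
      congr 1
      ring
  have hodd : HasSum (fun m => ((2 * m + 1)! : ℝ)⁻¹ • (t • A) ^ (2 * m + 1))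
      (Real.sin t • A) := by
    refine ((Real.hasSum_sin t).smul_const A).congr_fun fun m => ?_
    rw [smul_pow, pow_two_mul_add_one_of_mul_self_eq_neg hAA hAJ, smul_smul, smul_smul]
    congr 1
    ring
  rw [congrFun (NormedSpace.exp_eq_tsum ℝ) (t • A),
    (HasSum.even_add_odd (f := fun k => (k ! : ℝ)⁻¹ • (t • A) ^ k) heven hodd).tsum_eq]
  abel

end Exponential

section RotationBlocks

variable {𝕜 R m o : Type*} [Field 𝕜] [Ring R] [Algebra 𝕜 R] [Fintype m] [Fintype o]
  [DecidableEq o]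

-- With `Z = (z)`, `V = v`, `W = v*` and `s = ‖v‖²` these are the matrices `A` and `J`.
def rotationGenerator (Z : Matrix o o R) (V : Matrix m o R) (W : Matrix o m R) (s : 𝕜) :
    Matrix (o ⊕ m) (o ⊕ m) R :=
  fromBlocks Z (-W) V (-(s⁻¹ • (V * Z * W)))

def rotationProjection (V : Matrix m o R) (W : Matrix o m R) (s : 𝕜) :
    Matrix (o ⊕ m) (o ⊕ m) R :=
  fromBlocks 1 0 0 (s⁻¹ • (V * W))

variable {Z : Matrix o o R} {V : Matrix m o R} {W : Matrix o m R} {s : 𝕜}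

theorem rotationGenerator_mul_rotationProjection (hs : s ≠ 0) (hWV : W * V = s • 1) :
    rotationGenerator Z V W s * rotationProjection V W s = rotationGenerator Z V W s := by
  have hWV' (Y : Matrix o m R) : W * (V * Y) = s • Y := by
    rw [← Matrix.mul_assoc, hWV, Matrix.smul_mul, Matrix.one_mul]
  simp only [rotationGenerator, rotationProjection, fromBlocks_multiply, Matrix.mul_zero,
    Matrix.mul_one, add_zero, zero_add, Matrix.mul_smul, Matrix.smul_mul, Matrix.neg_mul,
    Matrix.mul_assoc, hWV', smul_smul, inv_mul_cancel₀ hs, one_smul, smul_neg]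

theorem rotationGenerator_mul_self (hs : s ≠ 0) (hWV : W * V = s • 1)
    (hZZ : Z * Z = (s - 1) • 1) :
    rotationGenerator Z V W s * rotationGenerator Z V W s = -rotationProjection V W s := by
  have hWV' (Y : Matrix o m R) : W * (V * Y) = s • Y := by
    rw [← Matrix.mul_assoc, hWV, Matrix.smul_mul, Matrix.one_mul]
  have hZZ' (Y : Matrix o m R) : Z * (Z * Y) = (s - 1) • Y := by
    rw [← Matrix.mul_assoc, hZZ, Matrix.smul_mul, Matrix.one_mul]
  simp only [rotationGenerator, rotationProjection, fromBlocks_multiply, fromBlocks_neg,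
    Matrix.mul_smul, Matrix.smul_mul, Matrix.mul_neg, Matrix.neg_mul, Matrix.mul_assoc, hWV',
    hZZ', smul_smul, inv_mul_cancel₀ hs, one_smul, smul_neg, neg_neg, hZZ, hWV]
  congr 1
  · rw [sub_smul, one_smul]
    abel
  · rw [neg_add_cancel, neg_zero]
  · rw [Matrix.mul_one, add_neg_cancel, neg_zero]
  · rw [show s⁻¹ * (s⁻¹ * (s * (s - 1))) = 1 - s⁻¹ by field_simp, sub_smul, one_smul]
    abel

end RotationBlocks

namespace Quaternion

theorem div_coe_eq_inv_smul (q : ℍ[ℝ]) (r : ℝ) : q / (r : ℍ[ℝ]) = r⁻¹ • q := by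
  rw [div_eq_mul_inv, ← coe_inv, mul_coe_eq_smul]

theorem replicateRow_star_mul_replicateCol {ι : Type*} [Fintype ι] (v : ι → ℍ[ℝ]) :
    replicateRow (Fin 1) (star v) * replicateCol (Fin 1) v =
      (∑ i, normSq (v i)) • (1 : Matrix (Fin 1) (Fin 1) ℍ[ℝ]) := by
  ext a b : 1
  rw [Subsingleton.elim a b]
  simp [Matrix.mul_apply, star_mul_self, Algebra.smul_def]

theorem of_const_mul_self_of_re_eq_zero {z : ℍ[ℝ]} (hz : z.re = 0) :
    ((of fun _ _ => z : Matrix (Fin 1) (Fin 1) ℍ[ℝ]) * of fun _ _ => z) =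
      (-normSq z) • 1 := by
  ext a b : 1
  rw [Subsingleton.elim a b]
  simp [Matrix.mul_apply, ← sq, sq_eq_neg_normSq.mpr hz, Algebra.smul_def]

end Quaternion

theorem stmt_9_general (n : ℕ) (z : ℍ[ℝ]) (hz : z + star z = 0)
    (v : Fin (n - 1) → ℍ[ℝ]) (hv : v ≠ 0)
    (hnorm : Quaternion.normSq z + ∑ i, Quaternion.normSq (v i) = 1)
    (A J : Matrix (Fin 1 ⊕ Fin (n - 1)) (Fin 1 ⊕ Fin (n - 1)) ℍ[ℝ])
    (hA : A = Matrix.fromBlocks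
      (Matrix.of fun _ _ => z)
      (Matrix.of fun _ j => -star (v j))
      (Matrix.of fun i _ => v i)
      (Matrix.of fun i j =>
        -(v i * z * star (v j)) / ((∑ k, Quaternion.normSq (v k) : ℝ) : ℍ[ℝ])))
    (hJ : J = Matrix.fromBlocks 1 0 0
      (Matrix.of fun i j =>
        v i * star (v j) / ((∑ k, Quaternion.normSq (v k) : ℝ) : ℍ[ℝ]))) :
    ∀ t : ℝ, NormedSpace.exp (t • A) = 1 - J + Real.cos t • J + Real.sin t • A := by
  intro t
  set s := ∑ k, Quaternion.normSq (v k)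
  have hs : s ≠ 0 := fun h => hv <| funext fun i => Quaternion.normSq_eq_zero.mp <|
    (Finset.sum_eq_zero_iff_of_nonneg fun k _ => Quaternion.normSq_nonneg).mp h i
      (Finset.mem_univ i)
  have hre : z.re = 0 := by simpa using congrArg QuaternionAlgebra.re hz
  have hWV := Quaternion.replicateRow_star_mul_replicateCol v
  have hZZ : ((of fun _ _ => z : Matrix (Fin 1) (Fin 1) ℍ[ℝ]) * of fun _ _ => z) =
      (s - 1) • 1 := by
    rw [Quaternion.of_const_mul_self_of_re_eq_zero hre, ← hnorm, sub_add_cancel_right]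
  have hA' : A = rotationGenerator (of fun _ _ => z) (replicateCol (Fin 1) v)
      (replicateRow (Fin 1) (star v)) s := by
    rw [hA]
    ext (i | i) (j | j) : 1 <;>
      simp [rotationGenerator, Matrix.mul_apply, Quaternion.div_coe_eq_inv_smul]
  have hJ' :
      J = rotationProjection (replicateCol (Fin 1) v) (replicateRow (Fin 1) (star v)) s := by
    rw [hJ]
    ext (i | i) (j | j) : 1 <;>
      simp [rotationProjection, Matrix.mul_apply, Quaternion.div_coe_eq_inv_smul]
  rw [hA', hJ']
  exact exp_smul_of_mul_self_eq_neg (rotationGenerator_mul_self hs hWV hZZ)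
    (rotationGenerator_mul_rotationProjection hs hWV) t

/-- With `A` and `J` the `n×n` quaternionic matrices defined in the context,
for every `t ∈ ℝ` one has `exp(t·A) = I − J + cos(t)·J + sin(t)·A`. -/
theorem stmt_9 (n : ℕ) (hn : 2 ≤ n) (z : ℍ[ℝ]) (hz : z + star z = 0)
    (v : Fin (n - 1) → ℍ[ℝ]) (hv : v ≠ 0)
    (hnorm : Quaternion.normSq z + ∑ i, Quaternion.normSq (v i) = 1)
    (A J : Matrix (Fin 1 ⊕ Fin (n - 1)) (Fin 1 ⊕ Fin (n - 1)) ℍ[ℝ])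
    (hA : A = Matrix.fromBlocks
      (Matrix.of fun _ _ => z)
      (Matrix.of fun _ j => -star (v j))
      (Matrix.of fun i _ => v i)
      (Matrix.of fun i j =>
        -(v i * z * star (v j)) / ((∑ k, Quaternion.normSq (v k) : ℝ) : ℍ[ℝ])))
    (hJ : J = Matrix.fromBlocks 1 0 0
      (Matrix.of fun i j =>
        v i * star (v j) / ((∑ k, Quaternion.normSq (v k) : ℝ) : ℍ[ℝ]))) :
    ∀ t : ℝ, NormedSpace.exp (t • A) = 1 - J + Real.cos t • J + Real.sin t • A :=
  stmt_9_general n z hz v hv hnorm A J hA hJ
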